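/- arXiv:1404.5274 — 4 statements merged into one kernel-verified Lean document; each statement's English description precedes it below -/
import Mathlib

section
/- Let d ≥ 1, β ∈ (0,1], L > 0, let I be an arbitrary index set, let {x_i}_{i∈I} ⊂ ℝ^d, and let f : ℝ^d → ℝ and {g_i : ℝ^d → ℝ}_{i∈I} be functions such that f = g_i on the open ball B(x_i, 20√d·L) for every i ∈ I and such that the support of f is contained in ⋃_{i∈I} B(x_i, 10√d·L). If S ≥ 0 satisfies |g_i|_{L,β} ≤ S for every i ∈ I, then |f|_{L,β} ≤ 3S. -/
/-- The supremum of the absolute value of `f`. -/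
noncomputable def supAbs {d : ℕ} (f : EuclideanSpace ℝ (Fin d) → ℝ) : ℝ :=
  ⨆ x, |f x|

/-- The scaled `β`-Hölder seminorm:
`sup_{x ≠ y} |f x - f y| / ‖x - y‖ ^ β`. -/
noncomputable def holderSemi {d : ℕ} (β : ℝ) (f : EuclideanSpace ℝ (Fin d) → ℝ) : ℝ :=
  ⨆ p : {p : EuclideanSpace ℝ (Fin d) × EuclideanSpace ℝ (Fin d) // p.1 ≠ p.2},
    |f p.1.1 - f p.1.2| / ‖p.1.1 - p.1.2‖ ^ β

/-- The scaled Hölder norm `|f|_{L,β} = sup |f| + L^β * [f]_β`. -/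
noncomputable def sHolderNorm (d : ℕ) (L β : ℝ) (f : EuclideanSpace ℝ (Fin d) → ℝ) : ℝ :=
  supAbs f + L ^ β * holderSemi β f

/-!
Every `g i` satisfies `|g i| ≤ S` and has Hölder constant at most `S / L ^ β`. A point where `f`
does not vanish lies in some ball `B(x i, 10√d L)`, and that ball fattened by `L` stays inside
`B(x i, 20√d L)`, where `f = g i`. Hence `|f| ≤ S`, and `f` inherits the Hölder bound of `g i` for
pairs at distance `< L`. For pairs at distance `≥ L`, `|f y - f z| ≤ 2 S ≤ 2 S (‖y - z‖ / L) ^ β`.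
Altogether `|f|_{L,β} ≤ S + 2 S`.
-/

open Metric Set Function

lemma norm_sub_rpow_pos {E : Type*} [NormedAddCommGroup E] {y z : E} (h : y ≠ z) (β : ℝ) :
    0 < ‖y - z‖ ^ β :=
  Real.rpow_pos_of_pos (norm_pos_iff.2 (sub_ne_zero.2 h)) β

section HolderNorm

variable {d : ℕ} {β L S : ℝ} {f : EuclideanSpace ℝ (Fin d) → ℝ}

lemma supAbs_nonneg : 0 ≤ supAbs f :=
  Real.iSup_nonneg fun _ => abs_nonneg _

lemma holderSemi_nonneg : 0 ≤ holderSemi β f :=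
  Real.iSup_nonneg fun _ => by positivity

lemma abs_le_supAbs (hf : ∃ M, ∀ y, |f y| ≤ M) (y : EuclideanSpace ℝ (Fin d)) :
    |f y| ≤ supAbs f := by
  obtain ⟨M, hM⟩ := hf
  exact le_ciSup ⟨M, forall_mem_range.2 hM⟩ y

lemma supAbs_le (hf : ∀ y, |f y| ≤ S) : supAbs f ≤ S :=
  ciSup_le hf

lemma abs_sub_le_holderSemi_mul (hf : ∃ H, ∀ y z, |f y - f z| ≤ H * ‖y - z‖ ^ β)
    (y z : EuclideanSpace ℝ (Fin d)) : |f y - f z| ≤ holderSemi β f * ‖y - z‖ ^ β := by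
  rcases eq_or_ne y z with rfl | hyz
  · rw [sub_self, abs_zero]
    exact mul_nonneg holderSemi_nonneg (Real.rpow_nonneg (norm_nonneg _) β)
  obtain ⟨H, hH⟩ := hf
  have hbdd : BddAbove (range fun p : {p : EuclideanSpace ℝ (Fin d) × EuclideanSpace ℝ (Fin d) //
      p.1 ≠ p.2} => |f p.1.1 - f p.1.2| / ‖p.1.1 - p.1.2‖ ^ β) :=
    ⟨H, forall_mem_range.2 fun p => (div_le_iff₀ (norm_sub_rpow_pos p.2 β)).2 (hH _ _)⟩
  exact (div_le_iff₀ (norm_sub_rpow_pos hyz β)).1 (le_ciSup hbdd ⟨(y, z), hyz⟩)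

lemma holderSemi_le {H : ℝ} (hH : 0 ≤ H) (hf : ∀ y z, |f y - f z| ≤ H * ‖y - z‖ ^ β) :
    holderSemi β f ≤ H :=
  Real.iSup_le (fun p => (div_le_iff₀ (norm_sub_rpow_pos p.2 β)).2 (hf _ _)) hH

lemma abs_le_of_sHolderNorm_le (hL : 0 ≤ L) (hf : ∃ M, ∀ y, |f y| ≤ M)
    (hfS : sHolderNorm d L β f ≤ S) (y : EuclideanSpace ℝ (Fin d)) : |f y| ≤ S := by
  have : 0 ≤ L ^ β * holderSemi β f := mul_nonneg (Real.rpow_nonneg hL β) holderSemi_nonneg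
  unfold sHolderNorm at hfS
  linarith [abs_le_supAbs hf y]

lemma abs_sub_le_of_sHolderNorm_le (hL : 0 < L)
    (hf : ∃ H, ∀ y z, |f y - f z| ≤ H * ‖y - z‖ ^ β) (hfS : sHolderNorm d L β f ≤ S)
    (y z : EuclideanSpace ℝ (Fin d)) : |f y - f z| ≤ S / L ^ β * ‖y - z‖ ^ β := by
  have hsemi : holderSemi β f ≤ S / L ^ β := by
    rw [le_div_iff₀' (Real.rpow_pos_of_pos hL β)]
    unfold sHolderNorm at hfS
    linarith [supAbs_nonneg (f := f)]
  exact (abs_sub_le_holderSemi_mul hf y z).trans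
    (mul_le_mul_of_nonneg_right hsemi (Real.rpow_nonneg (norm_nonneg _) β))

lemma sHolderNorm_le {A B : ℝ} (hL : 0 < L) (hB : 0 ≤ B) (hfA : ∀ y, |f y| ≤ A)
    (hfB : ∀ y z, |f y - f z| ≤ B / L ^ β * ‖y - z‖ ^ β) : sHolderNorm d L β f ≤ A + B := by
  have hLβ : 0 < L ^ β := Real.rpow_pos_of_pos hL β
  calc sHolderNorm d L β f
      ≤ A + L ^ β * (B / L ^ β) :=
        add_le_add (supAbs_le hfA)
          (mul_le_mul_of_nonneg_left (holderSemi_le (by positivity) hfB) hLβ.le)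
    _ = A + B := by rw [mul_div_cancel₀ B hLβ.ne']

end HolderNorm

section Localization

variable {E : Type*} [SeminormedAddCommGroup E] {f : E → ℝ} {β L S : ℝ}

lemma abs_sub_le_of_le_norm_sub (hβ : 0 ≤ β) (hL : 0 < L) (hf : ∀ y, |f y| ≤ S) {y z : E}
    (hyz : L ≤ ‖y - z‖) : |f y - f z| ≤ 2 * S / L ^ β * ‖y - z‖ ^ β := by
  have hLβ : 0 < L ^ β := Real.rpow_pos_of_pos hL β
  have hS : 0 ≤ S := (abs_nonneg _).trans (hf y)
  calc |f y - f z| ≤ |f y| + |f z| := abs_sub _ _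
    _ ≤ 2 * S := by linarith [hf y, hf z]
    _ = 2 * S / L ^ β * L ^ β := (div_mul_cancel₀ _ hLβ.ne').symm
    _ ≤ 2 * S / L ^ β * ‖y - z‖ ^ β := by gcongr

lemma abs_sub_le_of_local (hβ : 0 ≤ β) (hL : 0 < L) (hf : ∀ y, |f y| ≤ S)
    (hloc : ∀ y z, f y ≠ 0 → ‖y - z‖ < L → |f y - f z| ≤ S / L ^ β * ‖y - z‖ ^ β) (y z : E) :
    |f y - f z| ≤ 2 * S / L ^ β * ‖y - z‖ ^ β := by
  rcases le_or_gt L ‖y - z‖ with hfar | hnear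
  · exact abs_sub_le_of_le_norm_sub hβ hL hf hfar
  have hS : 0 ≤ S := (abs_nonneg _).trans (hf y)
  have hdouble : S / L ^ β * ‖y - z‖ ^ β ≤ 2 * S / L ^ β * ‖y - z‖ ^ β := by
    gcongr
    linarith
  refine le_trans ?_ hdouble
  by_cases hy : f y = 0
  · by_cases hz : f z = 0
    · rw [hy, hz, sub_self, abs_zero]
      positivity
    · rw [abs_sub_comm, norm_sub_rev]
      exact hloc z y hz (by rwa [norm_sub_rev])
  · exact hloc y z hy hnear

end Localization

lemma exists_eq_eq_of_mem_support {α γ ι : Type*} [PseudoMetricSpace α] [Zero γ] {f : α → γ}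
    {g : ι → α → γ} {x : ι → α} {r ρ R : ℝ} (heq : ∀ i, EqOn f (g i) (ball (x i) R))
    (hsupp : support f ⊆ ⋃ i, ball (x i) r) (hR : r + ρ ≤ R) (y z : α) (hy : f y ≠ 0)
    (hyz : dist y z < ρ) : ∃ i, f y = g i y ∧ f z = g i z := by
  obtain ⟨i, hi⟩ := mem_iUnion.1 (hsupp hy)
  rw [mem_ball] at hi
  have hz : dist z (x i) < R := by
    linarith [dist_triangle z y (x i), dist_comm y z]
  exact ⟨i, heq i (by rw [mem_ball]; linarith [dist_nonneg (x := y) (y := z)]), heq i hz⟩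

theorem scaled_holder_norm_extension_general
    (d : ℕ) (hd : 1 ≤ d) (β L : ℝ) (hβ0 : 0 < β) (hL : 0 < L)
    {I : Type*} (x : I → EuclideanSpace ℝ (Fin d))
    (f : EuclideanSpace ℝ (Fin d) → ℝ) (g : I → EuclideanSpace ℝ (Fin d) → ℝ)
    (hgb : ∀ i, ∃ M, ∀ y, |g i y| ≤ M)
    (hgh : ∀ i, ∃ H, ∀ y z, |g i y - g i z| ≤ H * ‖y - z‖ ^ β)
    (heq : ∀ i, Set.EqOn f (g i) (Metric.ball (x i) (20 * Real.sqrt d * L)))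
    (hsupp : closure (Function.support f) ⊆ ⋃ i, Metric.ball (x i) (10 * Real.sqrt d * L))
    (S : ℝ) (hS : 0 ≤ S)
    (hgS : ∀ i, sHolderNorm d L β (g i) ≤ S) :
    sHolderNorm d L β f ≤ 3 * S := by
  have hradii : 10 * Real.sqrt d * L + L ≤ 20 * Real.sqrt d * L := by
    have : (1 : ℝ) ≤ Real.sqrt d := Real.one_le_sqrt.2 (by exact_mod_cast hd)
    nlinarith
  have hpatch := exists_eq_eq_of_mem_support heq (subset_closure.trans hsupp) hradii
  have hfabs : ∀ y, |f y| ≤ S := by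
    intro y
    by_cases hy : f y = 0
    · simpa [hy] using hS
    obtain ⟨i, hi, -⟩ := hpatch y y hy (by rwa [dist_self])
    exact hi ▸ abs_le_of_sHolderNorm_le hL.le (hgb i) (hgS i) y
  have hloc : ∀ y z, f y ≠ 0 → ‖y - z‖ < L → |f y - f z| ≤ S / L ^ β * ‖y - z‖ ^ β := by
    intro y z hy hyz
    obtain ⟨i, hiy, hiz⟩ := hpatch y z hy (by rwa [dist_eq_norm])
    rw [hiy, hiz]
    exact abs_sub_le_of_sHolderNorm_le hL (hgh i) (hgS i) y z
  calc sHolderNorm d L β f ≤ S + 2 * S :=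
        sHolderNorm_le hL (by positivity) hfabs (abs_sub_le_of_local hβ0.le hL hfabs hloc)
    _ = 3 * S := by ring

theorem scaled_holder_norm_extension
    (d : ℕ) (hd : 1 ≤ d) (β L : ℝ) (hβ0 : 0 < β) (hβ1 : β ≤ 1) (hL : 0 < L)
    {I : Type*} (x : I → EuclideanSpace ℝ (Fin d))
    (f : EuclideanSpace ℝ (Fin d) → ℝ) (g : I → EuclideanSpace ℝ (Fin d) → ℝ)
    (hgb : ∀ i, ∃ M, ∀ y, |g i y| ≤ M)
    (hgh : ∀ i, ∃ H, ∀ y z, |g i y - g i z| ≤ H * ‖y - z‖ ^ β)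
    (heq : ∀ i, Set.EqOn f (g i) (Metric.ball (x i) (20 * Real.sqrt d * L)))
    (hsupp : closure (Function.support f) ⊆ ⋃ i, Metric.ball (x i) (10 * Real.sqrt d * L))
    (S : ℝ) (hS : 0 ≤ S)
    (hgS : ∀ i, sHolderNorm d L β (g i) ≤ S) :
    sHolderNorm d L β f ≤ 3 * S :=
  scaled_holder_norm_extension_general d hd β L hβ0 hL x f g hgb hgh heq hsupp S hS hgS
end

section
/- Let a > 0 and let L : ℕ → ℕ be defined recursively by L_{n+1} = ℓ_n · L_n, where ℓ_n = 5·⌊(L_n)^a / 5⌋ (the real power (L_n)^a, with ⌊·⌋ the integer floor). If L_0 ≥ 1 and (L_0)^a ≥ 10, then for every n ≥ 0 one has L_n ≤ L_{n+1}, (L_n)^a ≥ 10, and (1/2)·(L_n)^{1+a} ≤ L_{n+1} ≤ 2·(L_n)^{1+a}. -/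
theorem recursive_scale_growth
    (a : ℝ) (ha : 0 < a) (L : ℕ → ℕ)
    (hrec : ∀ n, L (n + 1) = 5 * ⌊((L n : ℝ) ^ a) / 5⌋₊ * L n)
    (hL0 : 1 ≤ L 0) (hL0a : (10 : ℝ) ≤ (L 0 : ℝ) ^ a) :
    ∀ n : ℕ,
      L n ≤ L (n + 1) ∧
      (10 : ℝ) ≤ (L n : ℝ) ^ a ∧
      (1 / 2) * (L n : ℝ) ^ (1 + a) ≤ (L (n + 1) : ℝ) ∧
      (L (n + 1) : ℝ) ≤ 2 * (L n : ℝ) ^ (1 + a) := by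
  have mono : ∀ n, 1 ≤ L n ∧ (10 : ℝ) ≤ (L n : ℝ) ^ a → L n ≤ L (n + 1) := by
    intro n ⟨h1, h2⟩
    have hk : 2 ≤ ⌊((L n : ℝ) ^ a) / 5⌋₊ := Nat.le_floor (by push_cast; linarith)
    rw [hrec]
    calc L n = 1 * L n := (one_mul _).symm
    _ ≤ 5 * ⌊((L n : ℝ) ^ a) / 5⌋₊ * L n :=
        Nat.mul_le_mul_right _ (by omega)
  have key : ∀ n, 1 ≤ L n ∧ (10 : ℝ) ≤ (L n : ℝ) ^ a := by
    intro n
    induction n with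
    | zero => exact ⟨hL0, hL0a⟩
    | succ n ih =>
      have hm := mono n ih
      have h1 : 1 ≤ L (n + 1) := le_trans ih.1 hm
      refine ⟨h1, le_trans ih.2 ?_⟩
      apply Real.rpow_le_rpow (by positivity) (by exact_mod_cast hm) ha.le
  intro n
  obtain ⟨h1, h2⟩ := key n
  have hm := mono n ⟨h1, h2⟩
  refine ⟨hm, h2, ?_, ?_⟩ <;>
  · have hLpos : (0 : ℝ) < (L n : ℝ) := by exact_mod_cast h1
    have hxpos : (0 : ℝ) < (L n : ℝ) ^ a / 5 := by positivity
    have hfl : (⌊((L n : ℝ) ^ a) / 5⌋₊ : ℝ) ≤ (L n : ℝ) ^ a / 5 := Nat.floor_le hxpos.le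
    have hfl2 : (L n : ℝ) ^ a / 5 < (⌊((L n : ℝ) ^ a) / 5⌋₊ : ℝ) + 1 := Nat.lt_floor_add_one _
    have hrw : ((L n : ℝ)) ^ (1 + a) = (L n : ℝ) * (L n : ℝ) ^ a := by
      rw [Real.rpow_add hLpos, Real.rpow_one]
    have hc : (L (n + 1) : ℝ) = 5 * (⌊((L n : ℝ) ^ a) / 5⌋₊ : ℝ) * (L n : ℝ) := by
      rw [hrec]; push_cast; ring
    rw [hc, hrw]; nlinarith [hLpos]
end

section
/- Let a > 0 and let L : ℕ → ℕ be defined recursively by L_{n+1} = ℓ_n · L_n, where ℓ_n = 5·⌊(L_n)^a / 5⌋, and assume L_0 ≥ 1 and (L_0)^a ≥ 10. Then for every θ > 0 the series ∑_{n=0}^∞ (L_n)^{−θ} converges. -/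
/-! Since `L` is nondecreasing, `(L n)^a ≥ (L 0)^a ≥ 10` persists, so every factor `ℓ n` is at
least `10`. Hence `L n ≥ 10^n` and the series is dominated by the geometric series of `10^(-θ)`. -/

open Real

theorem summable_rpow_neg_of_pow_le {c : ℝ} (hc : 1 < c) {u : ℕ → ℝ} (hu : ∀ n, c ^ n ≤ u n)
    {θ : ℝ} (hθ : 0 < θ) : Summable fun n => u n ^ (-θ) := by
  have hc0 : 0 < c := one_pos.trans hc
  refine Summable.of_nonneg_of_le (fun n => rpow_nonneg ((pow_pos hc0 n).le.trans (hu n)) _)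
    (fun n => ?_) (summable_geometric_of_lt_one (rpow_nonneg hc0.le _)
      (rpow_lt_one_of_one_lt_of_neg hc (neg_neg_of_pos hθ)))
  calc u n ^ (-θ) ≤ (c ^ n) ^ (-θ) := rpow_le_rpow_of_nonpos (pow_pos hc0 n) (hu n) (by linarith)
    _ = (c ^ (-θ)) ^ n := by
      rw [← rpow_natCast, ← rpow_mul hc0.le, ← rpow_natCast, ← rpow_mul hc0.le, mul_comm]

theorem ten_mul_le_scale_step {a : ℝ} {m : ℕ} (hm : 10 ≤ (m : ℝ) ^ a) :
    10 * m ≤ 5 * ⌊(m : ℝ) ^ a / 5⌋₊ * m := by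
  have hfloor : 2 ≤ ⌊(m : ℝ) ^ a / 5⌋₊ := Nat.le_floor (by push_cast; linarith)
  nlinarith

theorem ten_pow_mul_le_of_scale_rec {a : ℝ} (ha : 0 ≤ a) {L : ℕ → ℕ}
    (hrec : ∀ n, L (n + 1) = 5 * ⌊((L n : ℝ) ^ a) / 5⌋₊ * L n)
    (hL0a : (10 : ℝ) ≤ (L 0 : ℝ) ^ a) (n : ℕ) : 10 ^ n * L 0 ≤ L n := by
  induction n with
  | zero => simp
  | succ n ih =>
    have hL0_le : L 0 ≤ L n := le_mul_of_one_le_left' (Nat.one_le_pow _ _ (by norm_num)) |>.trans ih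
    have h10 : (10 : ℝ) ≤ (L n : ℝ) ^ a :=
      hL0a.trans (rpow_le_rpow (Nat.cast_nonneg _) (by exact_mod_cast hL0_le) ha)
    calc 10 ^ (n + 1) * L 0 = 10 * (10 ^ n * L 0) := by ring
      _ ≤ 10 * L n := Nat.mul_le_mul_left 10 ih
      _ ≤ L (n + 1) := (hrec n).symm ▸ ten_mul_le_scale_step h10

theorem recursive_scale_summable
    (a : ℝ) (ha : 0 < a) (L : ℕ → ℕ)
    (hrec : ∀ n, L (n + 1) = 5 * ⌊((L n : ℝ) ^ a) / 5⌋₊ * L n)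
    (hL0 : 1 ≤ L 0) (hL0a : (10 : ℝ) ≤ (L 0 : ℝ) ^ a)
    (θ : ℝ) (hθ : 0 < θ) :
    Summable (fun n => (L n : ℝ) ^ (-θ)) := by
  refine summable_rpow_neg_of_pow_le (c := 10) (by norm_num) (fun n => ?_) hθ
  have := le_mul_of_one_le_right' hL0 |>.trans (ten_pow_mul_le_of_scale_rec ha.le hrec hL0a n)
  exact_mod_cast this
end

section
/- Let (Ω, 𝓕, P) be a probability space, let d ≥ 1, R > 0 and M > 0, and let X : ℝ^d × Ω → ℝ be jointly measurable with: |X(y, ω)| ≤ 1 for all y and ω; E[X(y, ·)] = 0 for every y ∈ ℝ^d; and the random variables X(y, ·) and X(z, ·) independent whenever |y − z| ≥ R. Let p : ℝ^d → ℝ be measurable with 0 ≤ p(y) ≤ M for all y and ∫_{ℝ^d} p(y) dy = 1. Then E[ ( ∫_{ℝ^d} p(y) X(y, ω) dy )² ] ≤ M · vol(B(0, R)), where vol(B(0, R)) is the Lebesgue measure of the open Euclidean ball of radius R in ℝ^d. -/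
/-!
Expanding the square and applying Fubini,
`E[(∫ p X)²] = ∬ p(y) p(z) E[X(y) X(z)] dy dz`.
The covariance `E[X(y) X(z)]` is at most `1`, and it vanishes when `|y - z| ≥ R` by independence
and centering, so the double integral is at most `∫ p(y) (∫_{B(y,R)} p) dy ≤ M · vol(B(0,R))`.
-/

open MeasureTheory ProbabilityTheory Metric
open scoped ENNReal

lemma integral_weight_mul_weight_mul {E Ω : Type*} [MeasurableSpace Ω] (P : Measure Ω)
    (X : E × Ω → ℝ) (p : E → ℝ) (y z : E) :
    ∫ ω, p y * X (y, ω) * (p z * X (z, ω)) ∂P = p y * p z * ∫ ω, X (y, ω) * X (z, ω) ∂P := by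
  rw [← integral_const_mul]
  congr 1 with ω
  ring

lemma setIntegral_le_mul_measureReal {E : Type*} [MeasurableSpace E] {μ : Measure E} {s : Set E}
    {p : E → ℝ} {M : ℝ} (hs : μ s < ∞) (hp0 : ∀ x, 0 ≤ p x) (hpM : ∀ x, p x ≤ M) :
    ∫ x in s, p x ∂μ ≤ M * μ.real s :=
  (Real.le_norm_self _).trans <| norm_setIntegral_le_of_norm_le_const hs fun x _ => by
    rw [Real.norm_of_nonneg (hp0 x)]
    exact hpM x

lemma integral_mul_le_one {Ω : Type*} [MeasurableSpace Ω] {P : Measure Ω}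
    [IsProbabilityMeasure P] {f g : Ω → ℝ} (hf : ∀ ω, ‖f ω‖ ≤ 1) (hg : ∀ ω, ‖g ω‖ ≤ 1) :
    ∫ ω, f ω * g ω ∂P ≤ 1 :=
  (Real.le_norm_self _).trans <| by
    simpa using norm_integral_le_of_norm_le_const (μ := P) (C := 1) (f := f * g) <|
      ae_of_all _ fun ω => by
        rw [Pi.mul_apply, norm_mul]
        exact mul_le_one₀ (hf ω) (norm_nonneg _) (hg ω)

lemma ProbabilityTheory.IndepFun.integral_mul_eq_zero {Ω : Type*} [MeasurableSpace Ω]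
    {P : Measure Ω} {f g : Ω → ℝ} (hfg : IndepFun f g P) (hf : AEStronglyMeasurable f P)
    (hg : AEStronglyMeasurable g P) (hf0 : ∫ ω, f ω ∂P = 0) : ∫ ω, f ω * g ω ∂P = 0 := by
  simpa [hf0] using hfg.integral_mul_eq_mul_integral hf hg

section Covariance

variable {E Ω : Type*} [MeasurableSpace E] [MeasurableSpace Ω] {μ : Measure E}
  {P : Measure Ω} [IsFiniteMeasure P] {X : E × Ω → ℝ} {p : E → ℝ} {C : ℝ}

lemma integrable_weight_mul_weight_mul (hX : Measurable X) (hXC : ∀ q, ‖X q‖ ≤ C)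
    (hpm : Measurable p) (hp : Integrable p μ) :
    Integrable (fun a : Ω × E × E => p a.2.1 * X (a.2.1, a.1) * (p a.2.2 * X (a.2.2, a.1)))
      (P.prod (μ.prod μ)) := by
  have hdom : Integrable (fun a : Ω × E × E => C * C * (‖p a.2.1‖ * ‖p a.2.2‖))
      (P.prod (μ.prod μ)) :=
    ((integrable_const (μ := P) (1 : ℝ)).mul_prod (hp.norm.mul_prod hp.norm)).const_mul (C * C)
      |>.congr (ae_of_all _ fun a => by simp)
  refine hdom.mono' (by fun_prop) (ae_of_all _ fun a => ?_)
  simp only [norm_mul]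
  have hC : 0 ≤ C := (norm_nonneg _).trans (hXC (a.2.1, a.1))
  calc ‖p a.2.1‖ * ‖X (a.2.1, a.1)‖ * (‖p a.2.2‖ * ‖X (a.2.2, a.1)‖)
      ≤ ‖p a.2.1‖ * C * (‖p a.2.2‖ * C) := by gcongr <;> exact hXC _
    _ = C * C * (‖p a.2.1‖ * ‖p a.2.2‖) := by ring

variable [SFinite μ]

lemma integrable_weighted_covariance (hX : Measurable X) (hXC : ∀ q, ‖X q‖ ≤ C)
    (hpm : Measurable p) (hp : Integrable p μ) :
    Integrable (fun q : E × E => p q.1 * p q.2 * ∫ ω, X (q.1, ω) * X (q.2, ω) ∂P) (μ.prod μ) := by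
  simpa only [integral_weight_mul_weight_mul] using
    (integrable_weight_mul_weight_mul (P := P) hX hXC hpm hp).integral_prod_right

lemma integral_sq_integral_eq_integral_weighted_covariance (hX : Measurable X)
    (hXC : ∀ q, ‖X q‖ ≤ C) (hpm : Measurable p) (hp : Integrable p μ) :
    ∫ ω, (∫ y, p y * X (y, ω) ∂μ) ^ 2 ∂P =
      ∫ q, p q.1 * p q.2 * (∫ ω, X (q.1, ω) * X (q.2, ω) ∂P) ∂μ.prod μ := by
  have hsq : ∀ ω, (∫ y, p y * X (y, ω) ∂μ) ^ 2 =
      ∫ q, p q.1 * X (q.1, ω) * (p q.2 * X (q.2, ω)) ∂μ.prod μ := fun ω => by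
    rw [integral_prod_mul (fun y => p y * X (y, ω)) (fun y => p y * X (y, ω)), sq]
  simp_rw [hsq, ← integral_weight_mul_weight_mul P X p]
  exact integral_integral_swap (integrable_weight_mul_weight_mul (P := P) hX hXC hpm hp)

end Covariance

section FiniteRange

variable {E : Type*} [PseudoMetricSpace E] [MeasurableSpace E] [OpensMeasurableSpace E]
  {μ : Measure E} [SFinite μ]

lemma integral_prod_le_of_le_near_diagonal {R M : ℝ} {V : ℝ≥0∞} (hV : ∀ y, μ (ball y R) ≤ V)
    (hV_top : V ≠ ∞) {p : E → ℝ} (hp : Integrable p μ) (hp0 : ∀ y, 0 ≤ p y)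
    (hpM : ∀ y, p y ≤ M) {f : E × E → ℝ} (hf : Integrable f (μ.prod μ))
    (hnear : ∀ y z, dist y z < R → f (y, z) ≤ p y * p z)
    (hfar : ∀ y z, R ≤ dist y z → f (y, z) ≤ 0) :
    ∫ q, f q ∂μ.prod μ ≤ M * V.toReal * ∫ y, p y ∂μ := by
  have hslice : ∀ y, Integrable (fun z => f (y, z)) μ →
      ∫ z, f (y, z) ∂μ ≤ p y * (M * V.toReal) := fun y hfy => by
    have hball : μ (ball y R) < ∞ := (hV y).trans_lt hV_top.lt_top
    calc ∫ z, f (y, z) ∂μ ≤ ∫ z, (ball y R).indicator (fun z => p y * p z) z ∂μ := by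
          refine integral_mono hfy ((hp.const_mul (p y)).indicator measurableSet_ball) fun z => ?_
          by_cases hz : dist z y < R
          · simpa [Set.indicator_of_mem (mem_ball.2 hz), dist_comm] using hnear y z (by
              rwa [dist_comm])
          · rw [Set.indicator_of_notMem (by rwa [mem_ball])]
            exact hfar y z (by rw [dist_comm]; exact not_lt.1 hz)
      _ = p y * ∫ z in ball y R, p z ∂μ := by
          rw [integral_indicator measurableSet_ball, integral_const_mul]
      _ ≤ p y * (M * V.toReal) := by
          gcongr
          · exact hp0 y
          refine (setIntegral_le_mul_measureReal hball hp0 hpM).trans ?_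
          have hM : 0 ≤ M := (hp0 y).trans (hpM y)
          gcongr
          exact ENNReal.toReal_mono hV_top (hV y)
  rw [integral_prod f hf, mul_comm, ← integral_mul_const]
  refine integral_mono_ae hf.integral_prod_left (hp.mul_const _) ?_
  filter_upwards [hf.prod_right_ae] with y hfy
  exact hslice y hfy

end FiniteRange

theorem variance_bound_finite_range_dependence_general
    (d : ℕ) {Ω : Type*} [MeasurableSpace Ω]
    (P : Measure Ω) [IsProbabilityMeasure P]
    (R M : ℝ)
    (X : EuclideanSpace ℝ (Fin d) × Ω → ℝ) (hXmeas : Measurable X)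
    (hXbdd : ∀ y ω, |X (y, ω)| ≤ 1)
    (hXmean : ∀ y, ∫ ω, X (y, ω) ∂P = 0)
    (hXindep : ∀ y z : EuclideanSpace ℝ (Fin d), R ≤ ‖y - z‖ →
      IndepFun (fun ω => X (y, ω)) (fun ω => X (z, ω)) P)
    (p : EuclideanSpace ℝ (Fin d) → ℝ) (hpmeas : Measurable p)
    (hp0 : ∀ y, 0 ≤ p y) (hpM : ∀ y, p y ≤ M)
    (hp1 : ∫ y, p y = 1) :
    ∫ ω, (∫ y, p y * X (y, ω)) ^ 2 ∂P ≤
      M * (volume (Metric.ball (0 : EuclideanSpace ℝ (Fin d)) R)).toReal := by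
  have hp : Integrable p := Integrable.of_integral_ne_zero (by simp [hp1])
  have hXC : ∀ q, ‖X q‖ ≤ 1 := fun q => hXbdd q.1 q.2
  have hXm : ∀ y, AEStronglyMeasurable (fun ω => X (y, ω)) P := fun y =>
    (hXmeas.comp measurable_prodMk_left).aestronglyMeasurable
  have hcov_le : ∀ y z, ∫ ω, X (y, ω) * X (z, ω) ∂P ≤ 1 := fun y z =>
    integral_mul_le_one (fun _ => hXC _) (fun _ => hXC _)
  have hcov_far : ∀ y z, R ≤ dist y z → ∫ ω, X (y, ω) * X (z, ω) ∂P = 0 := fun y z h =>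
    (hXindep y z (by rwa [← dist_eq_norm])).integral_mul_eq_zero (hXm y) (hXm z) (hXmean y)
  rw [integral_sq_integral_eq_integral_weighted_covariance hXmeas hXC hpmeas hp]
  simpa [hp1] using integral_prod_le_of_le_near_diagonal
    (fun y => (Measure.addHaar_ball_center volume y R).le) measure_ball_lt_top.ne hp hp0 hpM
    (integrable_weighted_covariance hXmeas hXC hpmeas hp)
    (fun y z _ => mul_le_of_le_one_right (mul_nonneg (hp0 y) (hp0 z)) (hcov_le y z))
    (fun y z h => by rw [hcov_far y z h, mul_zero])

theorem variance_bound_finite_range_dependence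
    (d : ℕ) (hd : 1 ≤ d) {Ω : Type*} [MeasurableSpace Ω]
    (P : Measure Ω) [IsProbabilityMeasure P]
    (R M : ℝ) (hR : 0 < R) (hM : 0 < M)
    (X : EuclideanSpace ℝ (Fin d) × Ω → ℝ) (hXmeas : Measurable X)
    (hXbdd : ∀ y ω, |X (y, ω)| ≤ 1)
    (hXmean : ∀ y, ∫ ω, X (y, ω) ∂P = 0)
    (hXindep : ∀ y z : EuclideanSpace ℝ (Fin d), R ≤ ‖y - z‖ →
      IndepFun (fun ω => X (y, ω)) (fun ω => X (z, ω)) P)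
    (p : EuclideanSpace ℝ (Fin d) → ℝ) (hpmeas : Measurable p)
    (hp0 : ∀ y, 0 ≤ p y) (hpM : ∀ y, p y ≤ M)
    (hp1 : ∫ y, p y = 1) :
    ∫ ω, (∫ y, p y * X (y, ω)) ^ 2 ∂P ≤
      M * (volume (Metric.ball (0 : EuclideanSpace ℝ (Fin d)) R)).toReal :=
  variance_bound_finite_range_dependence_general d P R M X hXmeas hXbdd hXmean hXindep p hpmeas hp0
    hpM hp1
end
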